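/- Consider the orthogonal almost product structures on the Iwasawa Lie algebra for which both distributions are integrable, i.e. orthonormal pairs a, b ∈ span{e₁,e₂,e₃,e₄} (so that the 4-dimensional distribution (span{a,b})^⊥ is a subalgebra) with [a,b] = 0 (so that the 2-dimensional distribution span{a,b} is a subalgebra). The set of moment map values of these structures is the union of two line segments: {μ(baᵀ − abᵀ) : a, b ∈ span{e₁,e₂,e₃,e₄} orthonormal, [a,b] = 0} = {(x, y, 0) ∈ ℝ³ : x + y = 1 or x + y = −1, |x| ≤ 1, |y| ≤ 1}; equivalently, the corresponding simple unit 2-forms a∧b are exactly those whose self-dual part on span{e₁,…,e₄} equals ±½(e¹∧e² + e³∧e⁴), so these structures form two disjoint 2-spheres. -/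
import Mathlib


open Matrix

noncomputable section

/-- The toric moment map `μ(A) = (⟨Ae₁,e₂⟩, ⟨Ae₃,e₄⟩, ⟨Ae₅,e₆⟩)`. -/
def μ (A : Matrix (Fin 6) (Fin 6) ℝ) : ℝ × ℝ × ℝ := (A 1 0, A 3 2, A 5 4)

/-- The 2-step nilpotent Lie bracket of the Iwasawa Lie algebra on `ℝ⁶`:
`[e₁,e₃] = e₅`, `[e₄,e₂] = e₅`, `[e₁,e₄] = e₆`, `[e₂,e₃] = e₆`. -/
def br (X Y : Fin 6 → ℝ) : Fin 6 → ℝ :=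
  ![0, 0, 0, 0,
    X 0 * Y 2 - X 2 * Y 0 + X 3 * Y 1 - X 1 * Y 3,
    X 0 * Y 3 - X 3 * Y 0 + X 1 * Y 2 - X 2 * Y 1]

/-- The subspace `span{e₁, e₂, e₃, e₄}` of the Iwasawa Lie algebra. -/
def V4 : Submodule ℝ (Fin 6 → ℝ) :=
  Submodule.span ℝ {Pi.single 0 1, Pi.single 1 1, Pi.single 2 1, Pi.single 3 1}

lemma V4_apply45 {x : Fin 6 → ℝ} (hx : x ∈ V4) : x 4 = 0 ∧ x 5 = 0 := by
  induction hx using Submodule.span_induction with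
  | mem y hy =>
    simp only [Set.mem_insert_iff, Set.mem_singleton_iff] at hy
    rcases hy with rfl|rfl|rfl|rfl <;>
      exact ⟨by simp [Pi.single_apply], by simp [Pi.single_apply]⟩
  | zero => simp
  | add x y _ _ hx hy => simp [hx.1, hx.2, hy.1, hy.2]
  | smul c x _ hx => simp [hx.1, hx.2]

lemma mem_V4_02 (c s : ℝ) : (![c,0,s,0,0,0] : Fin 6 → ℝ) ∈ V4 := by
  have h : (![c,0,s,0,0,0] : Fin 6 → ℝ)
      = c • (Pi.single 0 1 : Fin 6 → ℝ) + s • (Pi.single 2 1 : Fin 6 → ℝ) := by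
    funext i; fin_cases i <;> simp [Pi.single_apply] <;> rfl
  rw [h]
  exact Submodule.add_mem _ (Submodule.smul_mem _ _ (Submodule.subset_span (by simp)))
    (Submodule.smul_mem _ _ (Submodule.subset_span (by simp)))

lemma mem_V4_13 (c s : ℝ) : (![0,c,0,s,0,0] : Fin 6 → ℝ) ∈ V4 := by
  have h : (![0,c,0,s,0,0] : Fin 6 → ℝ)
      = c • (Pi.single 1 1 : Fin 6 → ℝ) + s • (Pi.single 3 1 : Fin 6 → ℝ) := by
    funext i; fin_cases i <;> simp [Pi.single_apply] <;> rfl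
  rw [h]
  exact Submodule.add_mem _ (Submodule.smul_mem _ _ (Submodule.subset_span (by simp)))
    (Submodule.smul_mem _ _ (Submodule.subset_span (by simp)))

set_option maxHeartbeats 1000000 in
lemma key (a0 a1 a2 a3 b0 b1 b2 b3 : ℝ)
    (ha : a0*a0+a1*a1+a2*a2+a3*a3 = 1)
    (hb : b0*b0+b1*b1+b2*b2+b3*b3 = 1)
    (hab : a0*b0+a1*b1+a2*b2+a3*b3 = 0)
    (h4 : a0*b2 - a2*b0 + a3*b1 - a1*b3 = 0)
    (h5 : a0*b3 - a3*b0 + a1*b2 - a2*b1 = 0) :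
    ((a0*b1-a1*b0) + (a2*b3-a3*b2) = 1 ∨ (a0*b1-a1*b0) + (a2*b3-a3*b2) = -1)
    ∧ |a0*b1-a1*b0| ≤ 1 ∧ |a2*b3-a3*b2| ≤ 1 := by
  have hsq : ((a0*b1-a1*b0) + (a2*b3-a3*b2))^2 = 1 := by
    linear_combination (b0*b0+b1*b1+b2*b2+b3*b3) * ha + hb
      - (a0*b0+a1*b1+a2*b2+a3*b3) * hab - (a0*b2 - a2*b0 + (a3*b1 - a1*b3)) * h4
      - (a0*b3 - a3*b0 + (a1*b2 - a2*b1)) * h5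
  have hPQ : (a0*b1-a1*b0)*(a2*b3-a3*b2) = (a0*b2-a2*b0)^2 + (a0*b3-a3*b0)^2 := by
    linear_combination (-(a0*b2-a2*b0))*h4 - (a0*b3-a3*b0)*h5
  have hPQ0 : (a0*b1-a1*b0)*(a2*b3-a3*b2) ≥ 0 := by rw [hPQ]; positivity
  have hor : (a0*b1-a1*b0) + (a2*b3-a3*b2) = 1 ∨ (a0*b1-a1*b0) + (a2*b3-a3*b2) = -1 := by
    rcases mul_eq_zero.1 (show ((a0*b1-a1*b0) + (a2*b3-a3*b2) - 1) *
        ((a0*b1-a1*b0) + (a2*b3-a3*b2) + 1) = 0 by linear_combination hsq) with h|h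
    · left; linarith
    · right; linarith
  refine ⟨hor, abs_le.2 ⟨?_, ?_⟩, abs_le.2 ⟨?_, ?_⟩⟩ <;>
    rcases hor with h|h <;> nlinarith [hPQ0, sq_nonneg (a0*b1-a1*b0), sq_nonneg (a2*b3-a3*b2)]

/-- For the almost product structures on the Iwasawa Lie algebra with both
distributions integrable (orthonormal `a, b ∈ span{e₁,…,e₄}` with `[a,b] = 0`):
(i) the set of their moment values is the union of the two line segments
`{(x,y,0) : x + y = ±1, |x| ≤ 1, |y| ≤ 1}`; (ii) equivalently, `[a,b] = 0`
holds exactly when the self-dual part of `a∧b` on `span{e₁,…,e₄}` equals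
`±½(e¹∧e² + e³∧e⁴)`, so these structures form two disjoint 2-spheres. -/
theorem iwasawa_both_integrable :
    ({p : ℝ × ℝ × ℝ | ∃ a b : Fin 6 → ℝ, a ∈ V4 ∧ b ∈ V4 ∧
        a ⬝ᵥ a = 1 ∧ b ⬝ᵥ b = 1 ∧ a ⬝ᵥ b = 0 ∧ br a b = 0 ∧
        p = μ (vecMulVec b a - vecMulVec a b)} =
      {p : ℝ × ℝ × ℝ | (p.1 + p.2.1 = 1 ∨ p.1 + p.2.1 = -1) ∧
        |p.1| ≤ 1 ∧ |p.2.1| ≤ 1 ∧ p.2.2 = 0}) ∧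
    (∀ a b : Fin 6 → ℝ, a ∈ V4 → b ∈ V4 →
      a ⬝ᵥ a = 1 → b ⬝ᵥ b = 1 → a ⬝ᵥ b = 0 →
      (br a b = 0 ↔
        (((a 0 * b 1 - a 1 * b 0) + (a 2 * b 3 - a 3 * b 2) = 1 ∨
          (a 0 * b 1 - a 1 * b 0) + (a 2 * b 3 - a 3 * b 2) = -1) ∧
         (a 0 * b 2 - a 2 * b 0) + (a 3 * b 1 - a 1 * b 3) = 0 ∧
         (a 0 * b 3 - a 3 * b 0) + (a 1 * b 2 - a 2 * b 1) = 0))) := by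
  constructor
  · ext p
    simp only [Set.mem_setOf_eq]
    constructor
    · rintro ⟨a, b, haV, hbV, ha, hb, hab, hbr, rfl⟩
      obtain ⟨ha4, ha5⟩ := V4_apply45 haV
      obtain ⟨hb4, hb5⟩ := V4_apply45 hbV
      simp only [dotProduct, Fin.sum_univ_six, ha4, ha5, hb4, hb5, mul_zero, zero_mul,
        add_zero] at ha hb hab
      have h4 : a 0 * b 2 - a 2 * b 0 + a 3 * b 1 - a 1 * b 3 = 0 := congrFun hbr 4
      have h5 : a 0 * b 3 - a 3 * b 0 + a 1 * b 2 - a 2 * b 1 = 0 := congrFun hbr 5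
      obtain ⟨hor, hP, hQ⟩ := key (a 0) (a 1) (a 2) (a 3) (b 0) (b 1) (b 2) (b 3)
        ha hb hab h4 h5
      have hμ : μ (vecMulVec b a - vecMulVec a b)
          = (b 1 * a 0 - a 1 * b 0, b 3 * a 2 - a 3 * b 2, b 5 * a 4 - a 5 * b 4) := by
        simp [μ, vecMulVec, Matrix.sub_apply]
      have hμ' : μ (vecMulVec b a - vecMulVec a b)
          = (a 0 * b 1 - a 1 * b 0, a 2 * b 3 - a 3 * b 2, 0) := by
        rw [hμ, ha4, ha5]
        refine Prod.ext (by ring) (Prod.ext (by ring) (by simp))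
      rw [hμ']
      exact ⟨hor, hP, hQ, rfl⟩
    · rintro ⟨hor, hP, hQ, h0⟩
      obtain ⟨x, y, z⟩ := p
      simp only at hor hP hQ h0 ⊢
      subst h0
      rcases hor with hsum | hsum
      · -- x, y ∈ [0,1]
        have hx0 : 0 ≤ x := by rcases abs_le.1 hQ with ⟨h1, h2⟩; linarith
        have hy0 : 0 ≤ y := by rcases abs_le.1 hP with ⟨h1, h2⟩; linarith
        set c := Real.sqrt x with hc
        set s := Real.sqrt y with hs
        have hcc : c * c = x := Real.mul_self_sqrt hx0
        have hss : s * s = y := Real.mul_self_sqrt hy0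
        refine ⟨![c,0,s,0,0,0], ![0,c,0,s,0,0], mem_V4_02 c s, mem_V4_13 c s, ?_, ?_, ?_, ?_, ?_⟩
        · simp [dotProduct, Fin.sum_univ_six, show ((5:Fin 6)) = Fin.succ 4 from rfl, Matrix.cons_val_succ]; linarith
        · simp [dotProduct, Fin.sum_univ_six, show ((5:Fin 6)) = Fin.succ 4 from rfl, Matrix.cons_val_succ]; linarith
        · simp [dotProduct, Fin.sum_univ_six, show ((5:Fin 6)) = Fin.succ 4 from rfl, Matrix.cons_val_succ]
        · funext i; fin_cases i <;> simp [br, show ((5:Fin 6)) = Fin.succ 4 from rfl, Matrix.cons_val_succ] <;> ring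
        · have hμ : μ (vecMulVec (![0,c,0,s,0,0] : Fin 6 → ℝ) ![c,0,s,0,0,0]
              - vecMulVec (![c,0,s,0,0,0] : Fin 6 → ℝ) ![0,c,0,s,0,0])
              = (c * c - 0, s * s - 0, 0) := by
            simp [μ, vecMulVec, Matrix.sub_apply, show ((5:Fin 6)) = Fin.succ 4 from rfl, Matrix.cons_val_succ]
          rw [hμ, hcc, hss]
          simp
      · have hx0 : x ≤ 0 := by rcases abs_le.1 hQ with ⟨h1, h2⟩; linarith
        have hy0 : y ≤ 0 := by rcases abs_le.1 hP with ⟨h1, h2⟩; linarith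
        set c := Real.sqrt (-x) with hc
        set s := Real.sqrt (-y) with hs
        have hcc : c * c = -x := Real.mul_self_sqrt (by linarith)
        have hss : s * s = -y := Real.mul_self_sqrt (by linarith)
        refine ⟨![c,0,s,0,0,0], ![0,-c,0,-s,0,0], mem_V4_02 c s, ?_, ?_, ?_, ?_, ?_, ?_⟩
        · have := mem_V4_13 (-c) (-s); simpa using this
        · simp [dotProduct, Fin.sum_univ_six, show ((5:Fin 6)) = Fin.succ 4 from rfl, Matrix.cons_val_succ]; linarith
        · simp [dotProduct, Fin.sum_univ_six, show ((5:Fin 6)) = Fin.succ 4 from rfl, Matrix.cons_val_succ]; linarith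
        · simp [dotProduct, Fin.sum_univ_six, show ((5:Fin 6)) = Fin.succ 4 from rfl, Matrix.cons_val_succ]
        · funext i; fin_cases i <;> simp [br, show ((5:Fin 6)) = Fin.succ 4 from rfl, Matrix.cons_val_succ] <;> ring
        · have hμ : μ (vecMulVec (![0,-c,0,-s,0,0] : Fin 6 → ℝ) ![c,0,s,0,0,0]
              - vecMulVec (![c,0,s,0,0,0] : Fin 6 → ℝ) ![0,-c,0,-s,0,0])
              = (-c * c - 0, -s * s - 0, 0) := by
            simp [μ, vecMulVec, Matrix.sub_apply, show ((5:Fin 6)) = Fin.succ 4 from rfl, Matrix.cons_val_succ]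
          rw [hμ]
          have h1 : -c * c = x := by linarith [hcc]
          have h2 : -s * s = y := by linarith [hss]
          rw [h1, h2]
          simp
  · intro a b haV hbV ha hb hab
    obtain ⟨ha4, ha5⟩ := V4_apply45 haV
    obtain ⟨hb4, hb5⟩ := V4_apply45 hbV
    simp only [dotProduct, Fin.sum_univ_six, ha4, ha5, hb4, hb5, mul_zero, zero_mul,
      add_zero] at ha hb hab
    constructor
    · intro hbr
      have h4 : a 0 * b 2 - a 2 * b 0 + a 3 * b 1 - a 1 * b 3 = 0 := congrFun hbr 4
      have h5 : a 0 * b 3 - a 3 * b 0 + a 1 * b 2 - a 2 * b 1 = 0 := congrFun hbr 5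
      obtain ⟨hor, _, _⟩ := key (a 0) (a 1) (a 2) (a 3) (b 0) (b 1) (b 2) (b 3)
        ha hb hab h4 h5
      exact ⟨hor, by linarith [h4], by linarith [h5]⟩
    · rintro ⟨_, h4, h5⟩
      funext i; fin_cases i <;> simp [br, show ((5:Fin 6)) = Fin.succ 4 from rfl, Matrix.cons_val_succ] <;> linarith [h4, h5]
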